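/- Let x̄ be an ε-close solution of the ℓ₁-relaxation, i.e. ‖b−Ax̄‖₂² − ‖b−Ax̂‖₂² ≤ ε² where x̂ is an optimal solution. Then there exists an optimal solution x⋆ of the ℓ₀-problem with ‖Ax⋆ − Ax̄‖_∞ ≤ 2m^{3/2}‖A‖_∞ + ε. -/

import Mathlib

open scoped BigOperators Classical

noncomputable def l2 {m : ℕ} (v : Fin m → ℝ) : ℝ := Real.sqrt (∑ i, (v i) ^ 2)

def l1 {n : ℕ} (v : Fin n → ℝ) : ℝ := ∑ i, |v i|

noncomputable def l0 {n : ℕ} (v : Fin n → ℝ) : ℕ :=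
  (Finset.univ.filter (fun i => v i ≠ 0)).card

noncomputable def linf {m : ℕ} (v : Fin m → ℝ) : ℝ := ⨆ i, |v i|

noncomputable def matInf {m n : ℕ} (A : Matrix (Fin m) (Fin n) ℤ) : ℝ :=
  ⨆ i, ⨆ j, |(A i j : ℝ)|

/-!
Let `x̂` be optimal for the relaxation. The relaxed feasible set is convex, so `x̂` satisfies the
variational inequality `⟪A x̂ - b, A y - A x̂⟫ ≥ 0`, hence
`‖A y - A x̂‖² ≤ ‖A y - b‖² - ‖A x̂ - b‖²` for every relaxed-feasible `y`. For `y = x̄` this bounds `‖A x̄ - A x̂‖` by `ε`; for an ℓ₀-optimal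
`x⋆` it reduces the claim to finding a sparse `w` with `‖A w - b‖² ≤ ‖A x̂ - b‖² + 4 m³ ‖A‖_∞²`.

To find `w`, replace `x̂` by an extreme point `x` of `{x ∈ [0,1]ⁿ | A x = A x̂, ∑ x = ∑ x̂}`; it
has at most `m + 1` fractional coordinates. Round these to `0` or `1` so that at most `σ`
coordinates are `1` and the coordinate sum does not decrease. Then moving from `x` slightly away
from `w` stays feasible, so the variational inequality at `x` makes the cross term of
`‖A w - b‖² = ‖(A x - b) + A (w - x)‖²` nonpositive, while `‖A (w - x)‖² ≤ m ((m + 1) ‖A‖_∞)²`.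
-/

open Set Filter Topology Module
open scoped Finset Matrix RealInnerProductSpace

section LeastSquares

variable {V F : Type*} [AddCommGroup V] [Module ℝ V] [NormedAddCommGroup F]
  [InnerProductSpace ℝ F] {S : Set V} {L : V →ₗ[ℝ] F} {b : F} {x y : V}

theorem inner_map_sub_nonneg_of_isMinOn (hS : Convex ℝ S) (hx : x ∈ S)
    (hmin : IsMinOn (fun z => ‖L z - b‖) S x) (hy : y ∈ S) :
    0 ≤ ⟪L x - b, L y - L x⟫ := by
  have hK : Convex ℝ (L '' S) := hS.linear_image L
  have : Nonempty (L '' S) := ⟨⟨L x, mem_image_of_mem L hx⟩⟩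
  have hproj : ‖b - L x‖ = ⨅ w : L '' S, ‖b - w‖ := by
    refine le_antisymm (le_ciInf ?_) (ciInf_le ⟨0, ?_⟩ (⟨L x, mem_image_of_mem L hx⟩ : L '' S))
    · rintro ⟨_, z, hz, rfl⟩
      simpa only [norm_sub_rev b] using isMinOn_iff.1 hmin z hz
    · rintro _ ⟨w, rfl⟩
      exact norm_nonneg _
  have := (norm_eq_iInf_iff_real_inner_le_zero hK (mem_image_of_mem L hx)).1 hproj _
    (mem_image_of_mem L hy)
  rw [← neg_sub, inner_neg_left] at this
  linarith

theorem norm_map_sub_sq_le_of_isMinOn (hS : Convex ℝ S) (hx : x ∈ S)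
    (hmin : IsMinOn (fun z => ‖L z - b‖) S x) (hy : y ∈ S) :
    ‖L y - L x‖ ^ 2 ≤ ‖L y - b‖ ^ 2 - ‖L x - b‖ ^ 2 := by
  have hfo := inner_map_sub_nonneg_of_isMinOn hS hx hmin hy
  rw [show L y - b = (L x - b) + (L y - L x) by abel, norm_add_sq_real]
  linarith

theorem norm_map_add_sub_sq_le_of_isMinOn (hS : Convex ℝ S) (hx : x ∈ S)
    (hmin : IsMinOn (fun z => ‖L z - b‖) S x) {h : V} {t : ℝ} (ht : 0 < t)
    (hxt : x - t • h ∈ S) :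
    ‖L (x + h) - b‖ ^ 2 ≤ ‖L x - b‖ ^ 2 + ‖L h‖ ^ 2 := by
  have hfo := inner_map_sub_nonneg_of_isMinOn hS hx hmin hxt
  rw [map_sub, sub_sub_cancel_left, map_smul, inner_neg_right, real_inner_smul_right] at hfo
  have : ⟪L x - b, L h⟫ ≤ 0 := nonpos_of_mul_nonpos_right (by linarith) ht
  rw [map_add, add_sub_right_comm, norm_add_sq_real]
  linarith

end LeastSquares

section Cube

theorem mem_Icc_zero_one_iff {ι : Type*} {x : ι → ℝ} :
    x ∈ Icc 0 1 ↔ ∀ i, 0 ≤ x i ∧ x i ≤ 1 := by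
  simp only [mem_Icc, Pi.le_def, Pi.zero_apply, Pi.one_apply, forall_and]

variable {ι : Type*} [Fintype ι]

noncomputable def fracCoords (x : ι → ℝ) : Finset ι :=
  Finset.univ.filter fun j => x j ≠ 0 ∧ x j ≠ 1

theorem mem_fracCoords {x : ι → ℝ} {j : ι} : j ∈ fracCoords x ↔ x j ≠ 0 ∧ x j ≠ 1 := by
  simp [fracCoords]

theorem eventually_add_smul_mem_Icc {x h : ι → ℝ} (hx : x ∈ Icc 0 1)
    (hh : ∀ j ∉ fracCoords x, h j = 0) : ∀ᶠ t in 𝓝 (0 : ℝ), x + t • h ∈ Icc 0 1 := by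
  rw [mem_Icc_zero_one_iff] at hx
  simp only [mem_Icc_zero_one_iff, Pi.add_apply, Pi.smul_apply, smul_eq_mul]
  refine eventually_all.2 fun j => ?_
  by_cases hj : j ∈ fracCoords x
  · obtain ⟨hj0, hj1⟩ := mem_fracCoords.1 hj
    have hIoo : x j + 0 * h j ∈ Ioo 0 1 := by
      rw [zero_mul, add_zero]
      exact ⟨(hx j).1.lt_of_ne' hj0, (hx j).2.lt_of_ne hj1⟩
    have hcont : Continuous fun t : ℝ => x j + t * h j := by fun_prop
    filter_upwards [hcont.continuousAt.preimage_mem_nhds (isOpen_Ioo.mem_nhds hIoo)]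
      with t ht using ⟨ht.1.le, ht.2.le⟩
  · exact Eventually.of_forall fun t => by simpa [hh j hj] using hx j

theorem exists_ne_zero_map_eq_zero_of_finrank_lt {K W : Type*} [Field K] [AddCommGroup W]
    [Module K W] [FiniteDimensional K W] (L : (ι → K) →ₗ[K] W) (s : Finset ι)
    (hs : finrank K W < #s) : ∃ h ≠ 0, (∀ j ∉ s, h j = 0) ∧ L h = 0 := by
  let E := Function.ExtendByZero.linearMap K ((↑) : s → ι)
  have hker : LinearMap.ker (L ∘ₗ E) ≠ ⊥ :=
    LinearMap.ker_ne_bot_of_finrank_lt (by simpa using hs)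
  obtain ⟨y, hy, hy0⟩ := Submodule.ne_bot_iff _ |>.1 hker
  refine ⟨E y, fun h0 => hy0 ?_, fun j hj => ?_, hy⟩
  · exact Function.extend_injective Subtype.val_injective (0 : ι → K)
      (h0.trans (Function.ExtendByZero.linearMap K _).map_zero.symm)
  · simp only [E, Function.ExtendByZero.linearMap_apply]
    exact Function.extend_apply' _ _ _ fun ⟨a, ha⟩ => hj (ha ▸ a.2)

variable {W : Type*} [AddCommGroup W] [Module ℝ W] [FiniteDimensional ℝ W]

theorem card_fracCoords_le_of_mem_extremePoints (L : (ι → ℝ) →ₗ[ℝ] W) {c : W} {x : ι → ℝ}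
    (hx : x ∈ (Icc 0 1 ∩ L ⁻¹' {c}).extremePoints ℝ) : #(fracCoords x) ≤ finrank ℝ W := by
  by_contra! hlt
  obtain ⟨h, hh0, hsupp, hLh⟩ := exists_ne_zero_map_eq_zero_of_finrank_lt L _ hlt
  obtain ⟨⟨hxI, hxc⟩, hext⟩ := mem_extremePoints.1 hx
  have hsupp' : ∀ j ∉ fracCoords x, (-h) j = 0 := fun j hj => by simp [hsupp j hj]
  obtain ⟨t, ⟨hplus, hminus⟩, ht⟩ :=
    (((eventually_add_smul_mem_Icc hxI hsupp).and (eventually_add_smul_mem_Icc hxI hsupp')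
      ).filter_mono nhdsWithin_le_nhds |>.and self_mem_nhdsWithin).exists (f := 𝓝[>] (0 : ℝ))
  have hmem : ∀ u : ι → ℝ, x + t • u ∈ Icc 0 1 → L u = 0 → x + t • u ∈ Icc 0 1 ∩ L ⁻¹' {c} :=
    fun u hu hLu => ⟨hu, by simpa [hLu] using hxc⟩
  have hseg : x ∈ openSegment ℝ (x + t • h) (x + t • -h) :=
    ⟨1 / 2, 1 / 2, by norm_num, by norm_num, by norm_num, by module⟩
  have := (hext _ (hmem h hplus hLh) _ (hmem (-h) hminus (by simp [hLh])) hseg).1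
  exact hh0 (smul_eq_zero.1 (add_eq_left.1 this) |>.resolve_left ht.ne')

theorem exists_mem_Icc_map_eq_card_fracCoords_le (L : (ι → ℝ) →ₗ[ℝ] W) {x : ι → ℝ}
    (hx : x ∈ Icc 0 1) : ∃ y ∈ Icc 0 1, L y = L x ∧ #(fracCoords y) ≤ finrank ℝ W := by
  have hfibre : L ⁻¹' {L x} = (· - x) ⁻¹' (LinearMap.ker L : Set (ι → ℝ)) := by
    ext y; simp [sub_eq_zero]
  have hcomp : IsCompact (Icc 0 1 ∩ L ⁻¹' {L x}) := by
    rw [hfibre]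
    exact isCompact_Icc.inter_right
      ((LinearMap.ker L).closed_of_finiteDimensional.preimage (continuous_sub_right x))
  obtain ⟨y, hy⟩ := hcomp.extremePoints_nonempty ⟨x, hx, rfl⟩
  exact ⟨y, (extremePoints_subset hy).1, (extremePoints_subset hy).2,
    card_fracCoords_le_of_mem_extremePoints L hy⟩

theorem exists_finset_sum_le_card_le_of_sum_le {x : ι → ℝ} (hx : x ∈ Icc 0 1) {σ : ℕ}
    (hσ : ∑ j, x j ≤ σ) :
    ∃ s : Finset ι, #s ≤ σ ∧ ∑ j, x j ≤ #s ∧ ∀ j ∉ fracCoords x, (j ∈ s ↔ x j = 1) := by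
  rw [mem_Icc_zero_one_iff] at hx
  set O := Finset.univ.filter (x · = 1)
  set F := fracCoords x
  have hO : (#O : ℝ) ≤ ∑ j, x j := calc
    (#O : ℝ) = ∑ j ∈ O, x j := by
      rw [Finset.sum_congr rfl fun j hj => (Finset.mem_filter.1 hj).2, Finset.sum_const,
        nsmul_one]
    _ ≤ ∑ j, x j := Finset.sum_le_univ_sum_of_nonneg fun j => (hx j).1
  have hOF : ∑ j, x j ≤ #O + #F := calc
    ∑ j, x j = ∑ j ∈ O ∪ F, x j := by
      refine (Finset.sum_subset (Finset.subset_univ _) fun j _ hj => ?_).symm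
      by_contra hj0
      exact hj (Finset.mem_union_right _ (mem_fracCoords.2 ⟨hj0, fun h1 =>
        hj (Finset.mem_union_left _ (by simp [O, h1]))⟩))
    _ ≤ ∑ j ∈ O ∪ F, (1 : ℝ) := Finset.sum_le_sum fun j _ => (hx j).2
    _ = #(O ∪ F) := by simp
    _ ≤ #O + #F := by exact_mod_cast Finset.card_union_le O F
  obtain ⟨T, hTF, hT⟩ := Finset.exists_subset_card_eq (min_le_left #F (σ - #O))
  have hOT : Disjoint O T := Finset.disjoint_left.2 fun j hjO hjT =>
    (mem_fracCoords.1 (hTF hjT)).2 (Finset.mem_filter.1 hjO).2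
  have hOσ : #O ≤ σ := by exact_mod_cast hO.trans hσ
  have hcard : #(O ∪ T) = min (#O + #F) σ := by
    rw [Finset.card_union_of_disjoint hOT, hT]; omega
  refine ⟨O ∪ T, by omega, ?_, fun j hj => ?_⟩
  · rw [hcard, Nat.cast_min, Nat.cast_add]
    exact le_min hOF hσ
  · have hjT : j ∉ T := fun hjT => hj (hTF hjT)
    simp [O, hjT]

end Cube

def relaxedFeasible {n : ℕ} (σ : ℕ) : Set (Fin n → ℝ) :=
  {x | (∀ i, 0 ≤ x i ∧ x i ≤ 1) ∧ l1 x ≤ σ}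

def sparseFeasible {n : ℕ} (σ : ℕ) : Set (Fin n → ℝ) :=
  {x | (∀ i, 0 ≤ x i ∧ x i ≤ 1) ∧ l0 x ≤ σ}

section Feasibility

variable {n : ℕ} {σ : ℕ}

theorem l1_eq_sum_of_nonneg {x : Fin n → ℝ} (hx : ∀ i, 0 ≤ x i) : l1 x = ∑ i, x i :=
  Finset.sum_congr rfl fun i _ => abs_of_nonneg (hx i)

theorem relaxedFeasible_eq : relaxedFeasible (n := n) σ = Icc 0 1 ∩ {x | ∑ i, x i ≤ (σ : ℝ)} := by
  ext x
  simp only [relaxedFeasible, mem_inter_iff, mem_Icc_zero_one_iff, mem_ofPred_eq]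
  exact and_congr_right fun hx => by rw [l1_eq_sum_of_nonneg fun i => (hx i).1]

theorem convex_relaxedFeasible : Convex ℝ (relaxedFeasible (n := n) σ) := by
  rw [relaxedFeasible_eq]
  refine (convex_Icc 0 1).inter (convex_halfSpace_le ⟨fun x y => ?_, fun c x => ?_⟩ _)
  · simp [Finset.sum_add_distrib]
  · simp [Finset.mul_sum]

theorem l1_le_of_l0_le {x : Fin n → ℝ} (hx : ∀ i, 0 ≤ x i ∧ x i ≤ 1) (h : l0 x ≤ σ) :
    l1 x ≤ σ := calc
  l1 x = ∑ i ∈ Finset.univ.filter (x · ≠ 0), x i := by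
    rw [l1_eq_sum_of_nonneg fun i => (hx i).1, Finset.sum_filter_ne_zero]
  _ ≤ ∑ i ∈ Finset.univ.filter (x · ≠ 0), (1 : ℝ) := Finset.sum_le_sum fun i _ => (hx i).2
  _ ≤ σ := by simpa [l0] using h

theorem sparseFeasible_subset_relaxedFeasible :
    sparseFeasible (n := n) σ ⊆ relaxedFeasible σ :=
  fun _ hx => ⟨hx.1, l1_le_of_l0_le hx.1 hx.2⟩

theorem isClosed_setOf_l0_le : IsClosed {x : Fin n → ℝ | l0 x ≤ σ} := by
  have : {x : Fin n → ℝ | l0 x ≤ σ} =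
      ⋃ s ∈ {s : Finset (Fin n) | #s ≤ σ}, {x | ∀ i ∉ s, x i = 0} := by
    ext x
    simp only [mem_ofPred_eq, mem_iUnion, exists_prop]
    refine ⟨fun h => ⟨_, h, fun i hi => by simpa using hi⟩, fun ⟨s, hs, hx⟩ => ?_⟩
    refine (Finset.card_le_card fun i hi => ?_).trans hs
    by_contra his
    exact (Finset.mem_filter.1 hi).2 (hx i his)
  rw [this]
  refine (toFinite _).isClosed_biUnion fun s _ => ?_
  simp only [ofPred_forall]
  exact isClosed_iInter fun i => isClosed_iInter fun _ =>
    isClosed_eq (continuous_apply i) continuous_const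

theorem exists_isMinOn_sparseFeasible {f : (Fin n → ℝ) → ℝ} (hf : Continuous f) :
    ∃ x ∈ sparseFeasible σ, IsMinOn f (sparseFeasible σ) x := by
  have hcomp : IsCompact (sparseFeasible (n := n) σ) := by
    refine isCompact_Icc.of_isClosed_subset ?_ fun x hx => mem_Icc_zero_one_iff.2 hx.1
    have : sparseFeasible (n := n) σ = Icc 0 1 ∩ {x | l0 x ≤ σ} := by
      ext x; simp only [sparseFeasible, mem_inter_iff, mem_Icc_zero_one_iff, mem_ofPred_eq]
    exact this ▸ isClosed_Icc.inter isClosed_setOf_l0_le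
  exact hcomp.exists_isMinOn ⟨0, fun _ => by norm_num, by simp [l0]⟩ hf.continuousOn

end Feasibility

section Euclidean

variable {m n : ℕ}

noncomputable def mulVecL2 (A : Matrix (Fin m) (Fin n) ℝ) :
    (Fin n → ℝ) →ₗ[ℝ] EuclideanSpace ℝ (Fin m) where
  toFun x := WithLp.toLp 2 (A *ᵥ x)
  map_add' x y := by simp [Matrix.mulVec_add]
  map_smul' c x := by simp [Matrix.mulVec_smul]

theorem mulVecL2_apply (A : Matrix (Fin m) (Fin n) ℝ) (x : Fin n → ℝ) :
    mulVecL2 A x = WithLp.toLp 2 (A *ᵥ x) := rfl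

theorem l2_eq_norm (v : Fin m → ℝ) : l2 v = ‖WithLp.toLp 2 v‖ := by
  simp [l2, EuclideanSpace.norm_eq]

theorem l2_mulVec_sub (A : Matrix (Fin m) (Fin n) ℝ) (x : Fin n → ℝ) (b : Fin m → ℝ) :
    l2 (A *ᵥ x - b) = ‖mulVecL2 A x - WithLp.toLp 2 b‖ := by
  rw [l2_eq_norm, WithLp.toLp_sub, mulVecL2_apply]

theorem l2_sub_comm (u v : Fin m → ℝ) : l2 (u - v) = l2 (v - u) := by
  rw [l2_eq_norm, l2_eq_norm, WithLp.toLp_sub, WithLp.toLp_sub, norm_sub_rev]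

theorem linf_le_l2 (v : Fin m → ℝ) : linf v ≤ l2 v := by
  rw [l2_eq_norm]
  exact Real.iSup_le (fun i => PiLp.norm_apply_le (WithLp.toLp 2 v) i) (norm_nonneg _)

end Euclidean

theorem abs_mulVec_apply_le {κ ι : Type*} [Fintype ι] {A : Matrix κ ι ℝ} {M : ℝ}
    (hM : ∀ i j, |A i j| ≤ M) {h : ι → ℝ} {s : Finset ι} (hs : ∀ j ∉ s, h j = 0)
    (hh : ∀ j, |h j| ≤ 1) (i : κ) : |(A *ᵥ h) i| ≤ #s * M := calc
  |(A *ᵥ h) i| = |∑ j ∈ s, A i j * h j| := by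
    rw [Matrix.mulVec, dotProduct, Finset.sum_subset (Finset.subset_univ s)
      fun j _ hj => by rw [hs j hj, mul_zero]]
  _ ≤ ∑ j ∈ s, |A i j * h j| := Finset.abs_sum_le_sum_abs _ _
  _ ≤ ∑ j ∈ s, M := Finset.sum_le_sum fun j _ => by
    rw [abs_mul]; exact (mul_le_of_le_one_right (abs_nonneg _) (hh j)).trans (hM i j)
  _ = #s * M := by rw [Finset.sum_const, nsmul_eq_mul]

theorem norm_mulVecL2_sq_le {m n : ℕ} {A : Matrix (Fin m) (Fin n) ℝ} {M : ℝ}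
    (hM : ∀ i j, |A i j| ≤ M) {h : Fin n → ℝ} {s : Finset (Fin n)} (hs : ∀ j ∉ s, h j = 0)
    (hh : ∀ j, |h j| ≤ 1) : ‖mulVecL2 A h‖ ^ 2 ≤ m * (#s * M) ^ 2 := calc
  ‖mulVecL2 A h‖ ^ 2 = ∑ i, |(A *ᵥ h) i| ^ 2 := by
    simp [mulVecL2_apply, EuclideanSpace.norm_sq_eq]
  _ ≤ ∑ _i : Fin m, (#s * M) ^ 2 := Finset.sum_le_sum fun i _ =>
    pow_le_pow_left₀ (abs_nonneg _) (abs_mulVec_apply_le hM hs hh i) 2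
  _ = m * (#s * M) ^ 2 := by simp

section Rounding

variable {m n σ : ℕ}

theorem exists_mulVec_eq_sum_eq_card_fracCoords_le (A : Matrix (Fin m) (Fin n) ℝ)
    {x : Fin n → ℝ} (hx : x ∈ Icc 0 1) :
    ∃ y ∈ Icc 0 1, A *ᵥ y = A *ᵥ x ∧ ∑ j, y j = ∑ j, x j ∧ #(fracCoords y) ≤ m + 1 := by
  let P : (Fin n → ℝ) →ₗ[ℝ] (Fin m → ℝ) × ℝ := A.mulVecLin.prod (∑ j, LinearMap.proj j)
  obtain ⟨y, hy, hPy, hcard⟩ := exists_mem_Icc_map_eq_card_fracCoords_le P hx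
  simp only [LinearMap.prod_apply, LinearMap.coe_sum, LinearMap.coe_proj, Function.prod_apply,
    Matrix.mulVecBilin_apply, Finset.sum_apply, Function.eval, Prod.ext_iff, P] at hPy
  exact ⟨y, hy, hPy.1, hPy.2, by simpa using hcard⟩

theorem exists_mem_sparseFeasible_eq_of_notMem_fracCoords {x : Fin n → ℝ} (hx : x ∈ Icc 0 1)
    (hσ : ∑ j, x j ≤ σ) :
    ∃ w ∈ sparseFeasible σ, (∀ j ∉ fracCoords x, w j = x j) ∧ ∑ j, x j ≤ ∑ j, w j := by
  obtain ⟨s, hsσ, hsum, hs⟩ := exists_finset_sum_le_card_le_of_sum_le hx hσ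
  rw [mem_Icc_zero_one_iff] at hx
  refine ⟨fun j => if j ∈ s then 1 else 0, ⟨fun j => ?_, by simpa [l0] using hsσ⟩,
    fun j hj => ?_, by simpa [Finset.sum_boole] using hsum⟩
  · by_cases hj : j ∈ s <;> simp [hj]
  · by_cases hjs : j ∈ s
    · simp [hjs, (hs j hj).1 hjs]
    · have h1 : x j ≠ 1 := fun h1 => hjs ((hs j hj).2 h1)
      have h0 : x j = 0 := by_contra fun h0 => hj (mem_fracCoords.2 ⟨h0, h1⟩)
      simp [hjs, h0]

theorem exists_pos_sub_smul_mem_relaxedFeasible {x h : Fin n → ℝ} (hx : x ∈ Icc 0 1)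
    (hxσ : ∑ j, x j ≤ σ) (hh : ∀ j ∉ fracCoords x, h j = 0) (hsum : 0 ≤ ∑ j, h j) :
    ∃ t : ℝ, 0 < t ∧ x - t • h ∈ relaxedFeasible σ := by
  have hneg : ∀ j ∉ fracCoords x, (-h) j = 0 := fun j hj => by simp [hh j hj]
  obtain ⟨t, htI, ht⟩ := ((eventually_add_smul_mem_Icc hx hneg).filter_mono nhdsWithin_le_nhds
    |>.and self_mem_nhdsWithin).exists (f := 𝓝[>] (0 : ℝ))
  refine ⟨t, ht, relaxedFeasible_eq ▸ ⟨by simpa [sub_eq_add_neg] using htI, ?_⟩⟩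
  simp only [mem_ofPred_eq, Pi.sub_apply, Pi.smul_apply, smul_eq_mul, Finset.sum_sub_distrib,
    ← Finset.mul_sum]
  nlinarith [ht]

variable {A : Matrix (Fin m) (Fin n) ℝ} {M : ℝ} {b : EuclideanSpace ℝ (Fin m)}
  {xhat : Fin n → ℝ}

theorem exists_mem_sparseFeasible_norm_sq_le (hM : ∀ i j, |A i j| ≤ M)
    (hxhat : xhat ∈ relaxedFeasible σ)
    (hmin : IsMinOn (fun x => ‖mulVecL2 A x - b‖) (relaxedFeasible σ) xhat) :
    ∃ w ∈ sparseFeasible σ,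
      ‖mulVecL2 A w - b‖ ^ 2 ≤ ‖mulVecL2 A xhat - b‖ ^ 2 + m * ((m + 1) * M) ^ 2 := by
  rw [relaxedFeasible_eq] at hxhat
  obtain ⟨x, hxI, hAx, hsum, hcard⟩ := exists_mulVec_eq_sum_eq_card_fracCoords_le A hxhat.1
  have hxσ : ∑ j, x j ≤ σ := hsum ▸ hxhat.2
  have hL : mulVecL2 A x = mulVecL2 A xhat := by rw [mulVecL2_apply, mulVecL2_apply, hAx]
  have hmin' : IsMinOn (fun x => ‖mulVecL2 A x - b‖) (relaxedFeasible σ) x :=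
    isMinOn_iff.2 fun y hy => hL ▸ isMinOn_iff.1 hmin y hy
  obtain ⟨w, hw, hwx, hwsum⟩ := exists_mem_sparseFeasible_eq_of_notMem_fracCoords hxI hxσ
  have hsupp : ∀ j ∉ fracCoords x, (w - x) j = 0 := fun j hj => sub_eq_zero.2 (hwx j hj)
  have habs : ∀ j, |(w - x) j| ≤ 1 := fun j => by
    have := mem_Icc_zero_one_iff.1 hxI j
    rw [Pi.sub_apply, abs_le]; constructor <;> linarith [hw.1 j]
  obtain ⟨t, ht, hxt⟩ := exists_pos_sub_smul_mem_relaxedFeasible hxI hxσ hsupp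
    (by simpa [Finset.sum_sub_distrib] using hwsum)
  have key := norm_map_add_sub_sq_le_of_isMinOn convex_relaxedFeasible
    (relaxedFeasible_eq ▸ ⟨hxI, hxσ⟩) hmin' ht hxt
  rw [hL, add_sub_cancel] at key
  refine ⟨w, hw, key.trans (add_le_add_right ((norm_mulVecL2_sq_le hM hsupp habs).trans ?_) _)⟩
  rw [mul_pow, mul_pow]
  gcongr
  exact_mod_cast hcard

end Rounding

theorem cast_mul_add_one_mul_sq_le (m : ℕ) (M : ℝ) :
    m * ((m + 1) * M) ^ 2 ≤ (2 * (m : ℝ) ^ ((3 : ℝ) / 2) * M) ^ 2 := by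
  have hpow : ((m : ℝ) ^ ((3 : ℝ) / 2)) ^ 2 = m ^ 3 := by
    rw [← Real.rpow_natCast, ← Real.rpow_mul m.cast_nonneg]; norm_num
  have hcube : (m : ℝ) * (m + 1) ^ 2 ≤ 2 ^ 2 * m ^ 3 := by
    rcases Nat.eq_zero_or_pos m with rfl | hm
    · simp
    · have : (m : ℝ) + 1 ≤ 2 * m := by linarith [show (1 : ℝ) ≤ m by exact_mod_cast hm]
      calc (m : ℝ) * (m + 1) ^ 2 ≤ m * (2 * m) ^ 2 := by gcongr
        _ = 2 ^ 2 * (m : ℝ) ^ 3 := by ring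
  rw [mul_pow, mul_pow, mul_pow, hpow, ← mul_assoc]
  exact mul_le_mul_of_nonneg_right hcube (sq_nonneg M)

theorem norm_sub_le_of_isMinOn_sparseFeasible {m n σ : ℕ} {A : Matrix (Fin m) (Fin n) ℝ}
    {M : ℝ} (hM0 : 0 ≤ M) (hM : ∀ i j, |A i j| ≤ M) {b : EuclideanSpace ℝ (Fin m)}
    {xhat xstar : Fin n → ℝ} (hxhat : xhat ∈ relaxedFeasible σ)
    (hmin : IsMinOn (fun x => ‖mulVecL2 A x - b‖) (relaxedFeasible σ) xhat)
    (hxstar : xstar ∈ sparseFeasible σ)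
    (hmin₀ : IsMinOn (fun x => ‖mulVecL2 A x - b‖) (sparseFeasible σ) xstar) :
    ‖mulVecL2 A xstar - mulVecL2 A xhat‖ ≤ 2 * (m : ℝ) ^ ((3 : ℝ) / 2) * M := by
  obtain ⟨w, hw, hwb⟩ := exists_mem_sparseFeasible_norm_sq_le hM hxhat hmin
  have hstar_w : ‖mulVecL2 A xstar - b‖ ^ 2 ≤ ‖mulVecL2 A w - b‖ ^ 2 :=
    pow_le_pow_left₀ (norm_nonneg _) (isMinOn_iff.1 hmin₀ w hw) 2
  have hproj := norm_map_sub_sq_le_of_isMinOn convex_relaxedFeasible hxhat hmin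
    (sparseFeasible_subset_relaxedFeasible hxstar)
  refine (pow_le_pow_iff_left₀ (norm_nonneg _) (by positivity) two_ne_zero).1 ?_
  linarith [cast_mul_add_one_mul_sq_le m M]

theorem abs_le_matInf {m n : ℕ} (A : Matrix (Fin m) (Fin n) ℤ) (i : Fin m) (j : Fin n) :
    |(A i j : ℝ)| ≤ matInf A :=
  (le_ciSup (Set.finite_range _).bddAbove j).trans
    (le_ciSup (f := fun i => ⨆ j, |(A i j : ℝ)|) (Set.finite_range _).bddAbove i)

theorem matInf_nonneg {m n : ℕ} (A : Matrix (Fin m) (Fin n) ℤ) : 0 ≤ matInf A :=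
  Real.iSup_nonneg fun _ => Real.iSup_nonneg fun _ => abs_nonneg _

theorem eps_close_l0_proximity_general (m n : ℕ) (A : Matrix (Fin m) (Fin n) ℤ)
    (σ : ℕ) (ε : ℝ) (hε : 0 ≤ ε)
    (AR : Matrix (Fin m) (Fin n) ℝ) (hAR : AR = fun i j => (A i j : ℝ))
    (bR : Fin m → ℝ)
    (xhat : Fin n → ℝ)
    (hhatfeas : (∀ i, 0 ≤ xhat i ∧ xhat i ≤ 1) ∧ l1 xhat ≤ σ)
    (hhatopt : ∀ x : Fin n → ℝ, (∀ i, 0 ≤ x i ∧ x i ≤ 1) → l1 x ≤ σ →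
      l2 (AR.mulVec xhat - bR) ≤ l2 (AR.mulVec x - bR))
    (xbar : Fin n → ℝ)
    (hbarfeas : (∀ i, 0 ≤ xbar i ∧ xbar i ≤ 1) ∧ l1 xbar ≤ σ)
    (hclose : l2 (bR - AR.mulVec xbar) ^ 2 - l2 (bR - AR.mulVec xhat) ^ 2 ≤ ε ^ 2) :
    ∃ xstar : Fin n → ℝ,
      ((∀ i, 0 ≤ xstar i ∧ xstar i ≤ 1) ∧ l0 xstar ≤ σ) ∧
      (∀ x : Fin n → ℝ, (∀ i, 0 ≤ x i ∧ x i ≤ 1) → l0 x ≤ σ →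
        l2 (AR.mulVec xstar - bR) ≤ l2 (AR.mulVec x - bR)) ∧
      linf (AR.mulVec xstar - AR.mulVec xbar)
        ≤ 2 * (m : ℝ) ^ ((3 : ℝ) / 2) * matInf A + ε := by
  set L := mulVecL2 AR
  set b := WithLp.toLp 2 bR
  have hres (x : Fin n → ℝ) : l2 (AR *ᵥ x - bR) = ‖L x - b‖ := l2_mulVec_sub AR x bR
  have hhat : IsMinOn (fun x => ‖L x - b‖) (relaxedFeasible σ) xhat :=
    isMinOn_iff.2 fun x hx => by simpa only [hres] using hhatopt x hx.1 hx.2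
  have hcont : Continuous fun x => ‖L x - b‖ :=
    (L.continuous_of_finiteDimensional.sub continuous_const).norm
  obtain ⟨xstar, hxstar, hmin₀⟩ := exists_isMinOn_sparseFeasible (σ := σ) hcont
  refine ⟨xstar, hxstar, fun x h01 hl0 => ?_, ?_⟩
  · simpa only [hres] using isMinOn_iff.1 hmin₀ x ⟨h01, hl0⟩
  have hstar := norm_sub_le_of_isMinOn_sparseFeasible (matInf_nonneg A)
    (fun i j => hAR ▸ abs_le_matInf A i j) hhatfeas hhat hxstar hmin₀
  have hbar : ‖L xbar - L xhat‖ ≤ ε := by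
    have := norm_map_sub_sq_le_of_isMinOn convex_relaxedFeasible hhatfeas hhat hbarfeas
    rw [l2_sub_comm, l2_sub_comm bR, hres, hres] at hclose
    exact (pow_le_pow_iff_left₀ (norm_nonneg _) hε two_ne_zero).1 (this.trans hclose)
  calc linf (AR *ᵥ xstar - AR *ᵥ xbar) ≤ ‖L xstar - L xbar‖ := by
        simpa [l2_eq_norm, L, mulVecL2_apply] using linf_le_l2 (AR *ᵥ xstar - AR *ᵥ xbar)
    _ ≤ ‖L xstar - L xhat‖ + ‖L xbar - L xhat‖ := by
        simpa only [norm_sub_rev (L xhat)] using norm_sub_le_norm_sub_add_norm_sub _ (L xhat) _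
    _ ≤ _ := add_le_add hstar hbar

/-- for an ε-close solution `x̄` of the ℓ₁-relaxation there is an
optimal solution `x⋆` of the ℓ₀-problem with
`‖Ax⋆ − Ax̄‖_∞ ≤ 2 m^{3/2} ‖A‖_∞ + ε`. -/
theorem eps_close_l0_proximity (m n : ℕ) (A : Matrix (Fin m) (Fin n) ℤ)
    (b : Fin m → ℤ) (σ : ℕ) (hσ : 1 ≤ σ) (ε : ℝ) (hε : 0 ≤ ε)
    (AR : Matrix (Fin m) (Fin n) ℝ) (hAR : AR = fun i j => (A i j : ℝ))
    (bR : Fin m → ℝ) (hbR : bR = fun r => (b r : ℝ))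
    (xhat : Fin n → ℝ)
    (hhatfeas : (∀ i, 0 ≤ xhat i ∧ xhat i ≤ 1) ∧ l1 xhat ≤ σ)
    (hhatopt : ∀ x : Fin n → ℝ, (∀ i, 0 ≤ x i ∧ x i ≤ 1) → l1 x ≤ σ →
      l2 (AR.mulVec xhat - bR) ≤ l2 (AR.mulVec x - bR))
    (xbar : Fin n → ℝ)
    (hbarfeas : (∀ i, 0 ≤ xbar i ∧ xbar i ≤ 1) ∧ l1 xbar ≤ σ)
    (hclose : l2 (bR - AR.mulVec xbar) ^ 2 - l2 (bR - AR.mulVec xhat) ^ 2 ≤ ε ^ 2) :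
    ∃ xstar : Fin n → ℝ,
      ((∀ i, 0 ≤ xstar i ∧ xstar i ≤ 1) ∧ l0 xstar ≤ σ) ∧
      (∀ x : Fin n → ℝ, (∀ i, 0 ≤ x i ∧ x i ≤ 1) → l0 x ≤ σ →
        l2 (AR.mulVec xstar - bR) ≤ l2 (AR.mulVec x - bR)) ∧
      linf (AR.mulVec xstar - AR.mulVec xbar)
        ≤ 2 * (m : ℝ) ^ ((3 : ℝ) / 2) * matInf A + ε :=
  eps_close_l0_proximity_general m n A σ ε hε AR hAR bR xhat hhatfeas hhatopt xbar hbarfeas hclose
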